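/- Let a, b, c be positive integers with γ²·a ≥ max(γ·b, c) where γ = 3000, and let g(t) = t/(log₂(2+t))². Then the link potential change ΔΦ (as defined by the eight-term expression for linking) is at most 2·g(log₂(a/c) + C) for an absolute constant C. -/

import Mathlib

noncomputable def f (x : ℝ) : ℝ := Real.logb 2 x / (Real.logb 2 (2 + Real.logb 2 x)) ^ 2

noncomputable def g (t : ℝ) : ℝ := t / (Real.logb 2 (2 + t)) ^ 2

/-!
Write `f = g ∘ log₂`. On `[0, ∞)` the function `g` is nonnegative, monotone (this reduces to
`log (2 + t) ≥ 2t / (2 + t)`) and subadditive, so `f` is monotone and submultiplicative on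
`[1, ∞)`. Each positive term of `ΔΦ` is then dominated by a negative one up to a bounded factor.
If `c ≤ a` the two factors that remain are `a / c` and `2a / c`, so `ΔΦ ≤ g L + g (L + 1)` with
`L = log₂ (a / c) ≥ 0`. If `a ≤ c ≤ 3000² a` they are `2` and `2²⁴`, so `ΔΦ ≤ g 1 + g 24 ≤ 25`,
while `L ≥ -24` keeps the right-hand side above `2 g (2¹¹ - 2) > 25` for `C = 2070`.
-/

open Real Set

lemma two_mul_div_two_add_le_log_two_add {t : ℝ} (ht : 0 ≤ t) :
    2 * t / (2 + t) ≤ log (2 + t) :=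
  calc 2 * t / (2 + t) ≤ 2 * (1 + t) / ((1 + t) + 2) := by
        rw [div_le_div_iff₀ (by positivity) (by positivity)]; nlinarith
    _ ≤ log (1 + (1 + t)) := le_log_one_add_of_nonneg (by positivity)
    _ = log (2 + t) := by ring_nf

lemma monotoneOn_div_log_two_add_sq : MonotoneOn (fun t : ℝ => t / log (2 + t) ^ 2) (Ici 0) := by
  have hderiv : ∀ t : ℝ, 0 ≤ t → HasDerivAt (fun t : ℝ => t / log (2 + t) ^ 2)
      ((log (2 + t) ^ 2 - log (2 + t) * (2 * t / (2 + t))) / (log (2 + t) ^ 2) ^ 2) t := by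
    intro t ht
    have hlog : HasDerivAt (fun t : ℝ => log (2 + t)) (1 / (2 + t)) t :=
      ((hasDerivAt_id t).const_add 2).log (by positivity)
    have hpos : 0 < log (2 + t) := log_pos (by linarith)
    exact ((hasDerivAt_id' t).fun_div (hlog.fun_pow 2) (pow_ne_zero 2 hpos.ne')).congr_deriv
      (by norm_num; ring)
  refine monotoneOn_of_hasDerivWithinAt_nonneg (convex_Ici 0)
    (fun t ht => (hderiv t ht).continuousAt.continuousWithinAt)
    (fun t ht => (hderiv t (interior_subset ht)).hasDerivWithinAt) fun t ht => ?_
  have ht : 0 ≤ t := interior_subset ht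
  have hlog := two_mul_div_two_add_le_log_two_add ht
  have hpos : 0 ≤ 2 * t / (2 + t) := by positivity
  refine div_nonneg (sub_nonneg.2 ?_) (by positivity)
  rw [sq]
  exact mul_le_mul_of_nonneg_left hlog (hpos.trans hlog)

lemma g_eq_mul_div_log_sq (t : ℝ) : g t = log 2 ^ 2 * (t / log (2 + t) ^ 2) := by
  rw [g, logb, div_pow, div_div_eq_mul_div]
  ring

lemma g_monotoneOn : MonotoneOn g (Ici 0) := fun s hs t ht hst => by
  rw [g_eq_mul_div_log_sq, g_eq_mul_div_log_sq]
  exact mul_le_mul_of_nonneg_left (monotoneOn_div_log_two_add_sq hs ht hst) (sq_nonneg _)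

lemma one_le_logb_two_add {t : ℝ} (ht : 0 ≤ t) : 1 ≤ logb 2 (2 + t) := by
  rw [← logb_self_eq_one one_lt_two]
  exact logb_le_logb_of_le one_lt_two two_pos (by linarith)

lemma g_nonneg {t : ℝ} (ht : 0 ≤ t) : 0 ≤ g t :=
  div_nonneg ht (sq_nonneg _)

lemma g_le_self {t : ℝ} (ht : 0 ≤ t) : g t ≤ t :=
  div_le_self ht (one_le_pow₀ (one_le_logb_two_add ht))

lemma g_add_le {s t : ℝ} (hs : 0 ≤ s) (ht : 0 ≤ t) : g (s + t) ≤ g s + g t := by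
  have hsq : ∀ {u v : ℝ}, 0 ≤ u → u ≤ v → logb 2 (2 + u) ^ 2 ≤ logb 2 (2 + v) ^ 2 :=
    fun hu huv => pow_le_pow_left₀ (zero_le_one.trans (one_le_logb_two_add hu))
      (logb_le_logb_of_le one_lt_two (by linarith) (by linarith)) 2
  have hpos : ∀ {u : ℝ}, 0 ≤ u → 0 < logb 2 (2 + u) ^ 2 :=
    fun hu => pow_pos (zero_lt_one.trans_le (one_le_logb_two_add hu)) 2
  rw [g, add_div]
  exact add_le_add (div_le_div_of_nonneg_left hs (hpos hs) (hsq hs (by linarith)))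
    (div_le_div_of_nonneg_left ht (hpos ht) (hsq ht (by linarith)))

lemma f_eq_g_logb (x : ℝ) : f x = g (logb 2 x) := rfl

lemma f_nonneg {x : ℝ} (hx : 1 ≤ x) : 0 ≤ f x :=
  g_nonneg (logb_nonneg one_lt_two hx)

lemma f_le_f {x y : ℝ} (hx : 1 ≤ x) (hxy : x ≤ y) : f x ≤ f y :=
  g_monotoneOn (logb_nonneg one_lt_two hx) (logb_nonneg one_lt_two (hx.trans hxy))
    (logb_le_logb_of_le one_lt_two (by linarith) hxy)

lemma f_le_add_of_le_mul {x y z : ℝ} (hx : 1 ≤ x) (hy : 1 ≤ y) (hz : 1 ≤ z) (h : x ≤ y * z) :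
    f x ≤ f y + f z :=
  calc f x ≤ f (y * z) := f_le_f hx h
    _ = g (logb 2 y + logb 2 z) := by rw [f_eq_g_logb, logb_mul (by positivity) (by positivity)]
    _ ≤ f y + f z := g_add_le (logb_nonneg one_lt_two hy) (logb_nonneg one_lt_two hz)

noncomputable def linkPotentialChange (a b c : ℝ) : ℝ :=
  f ((a + b + 1) / a) + f ((a + b + 1) / b) + f ((a + b + c + 2) / (a + b + 1)) +
    f ((a + b + c + 2) / c) - f ((a + b + c + 2) / a) -
    f ((a + b + c + 2) / (b + c + 1)) - f ((b + c + 1) / b) - f ((b + c + 1) / c)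

section LinkPotentialChange

variable {a b c : ℝ}

lemma linkPotentialChange_le_of_le (hb : 0 < b) (hc : 0 < c) (hca : c ≤ a) :
    linkPotentialChange a b c ≤ f (a / c) + f (2 * (a / c)) := by
  have ha : 0 < a := hc.trans_le hca
  have h1 : f ((a + b + 1) / a) ≤ f ((a + b + c + 2) / a) :=
    f_le_f ((one_le_div ha).2 (by linarith)) (div_le_div_of_nonneg_right (by linarith) ha.le)
  have h2 : f ((a + b + 1) / b) ≤ f ((b + c + 1) / b) + f (a / c) := by
    refine f_le_add_of_le_mul ((one_le_div hb).2 (by linarith)) ((one_le_div hb).2 (by linarith))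
      ((one_le_div hc).2 hca) ?_
    rw [div_mul_div_comm, div_le_div_iff₀ hb (by positivity)]
    nlinarith [mul_nonneg (mul_nonneg hb.le (by linarith : 0 ≤ b + 1)) (sub_nonneg.2 hca)]
  have h3 : f ((a + b + c + 2) / (a + b + 1)) ≤ f ((a + b + c + 2) / (b + c + 1)) :=
    f_le_f ((one_le_div (by positivity)).2 (by linarith))
      (div_le_div_of_nonneg_left (by positivity) (by positivity) (by linarith))
  have h4 : f ((a + b + c + 2) / c) ≤ f ((b + c + 1) / c) + f (2 * (a / c)) := by
    refine f_le_add_of_le_mul ((one_le_div hc).2 (by linarith)) ((one_le_div hc).2 (by linarith))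
      ?_ ?_
    · rw [mul_div_assoc', one_le_div hc]; linarith
    rw [mul_div_assoc', div_mul_div_comm, div_le_div_iff₀ hc (by positivity)]
    nlinarith [mul_nonneg hc.le (mul_nonneg (sub_nonneg.2 hca) (by linarith : 0 ≤ b + c + 2)),
      mul_pos hc (mul_pos ha hb)]
  unfold linkPotentialChange
  linarith

lemma linkPotentialChange_le_of_ge {K : ℝ} (ha : 0 < a) (hb : 0 < b) (hac : a ≤ c) (hK : 1 ≤ K)
    (hcK : c ≤ K * a) : linkPotentialChange a b c ≤ f 2 + f K := by
  have hc : 0 < c := ha.trans_le hac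
  have h1 : f ((a + b + 1) / a) ≤ f ((a + b + c + 2) / a) :=
    f_le_f ((one_le_div ha).2 (by linarith)) (div_le_div_of_nonneg_right (by linarith) ha.le)
  have h2 : f ((a + b + 1) / b) ≤ f ((b + c + 1) / b) :=
    f_le_f ((one_le_div hb).2 (by linarith)) (div_le_div_of_nonneg_right (by linarith) hb.le)
  have h3 : f ((a + b + c + 2) / (a + b + 1)) ≤ f ((a + b + c + 2) / (b + c + 1)) + f K := by
    refine f_le_add_of_le_mul ((one_le_div (by positivity)).2 (by linarith))
      ((one_le_div (by positivity)).2 (by linarith)) hK ?_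
    rw [div_mul_eq_mul_div, div_le_div_iff₀ (by positivity) (by positivity)]
    have hden : b + c + 1 ≤ K * (a + b + 1) := by
      nlinarith [mul_nonneg (sub_nonneg.2 hK) (by linarith : 0 ≤ b + 1)]
    nlinarith [mul_le_mul_of_nonneg_left hden (by linarith : 0 ≤ a + b + c + 2)]
  have h4 : f ((a + b + c + 2) / c) ≤ f ((b + c + 1) / c) + f 2 := by
    refine f_le_add_of_le_mul ((one_le_div hc).2 (by linarith)) ((one_le_div hc).2 (by linarith))
      one_le_two ?_
    rw [div_mul_eq_mul_div, div_le_div_iff_of_pos_right hc]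
    linarith
  have h5 : 0 ≤ f ((a + b + c + 2) / a) := f_nonneg ((one_le_div ha).2 (by linarith))
  unfold linkPotentialChange
  linarith

end LinkPotentialChange

lemma g_two_pow_sub_two (n : ℕ) : g (2 ^ n - 2) = (2 ^ n - 2) / n ^ 2 := by
  rw [g, add_sub_cancel, logb_pow, logb_self_eq_one one_lt_two, mul_one]

theorem stmt_12 : ∃ C : ℝ, ∀ a b c : ℝ,
    (∃ a' : ℕ, 0 < a' ∧ a = a') → (∃ b' : ℕ, 0 < b' ∧ b = b') → (∃ c' : ℕ, 0 < c' ∧ c = c') →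
    (3000 : ℝ) ^ 2 * a ≥ max ((3000 : ℝ) * b) c →
    f ((a + b + 1) / a) + f ((a + b + 1) / b) + f ((a + b + c + 2) / (a + b + 1)) +
      f ((a + b + c + 2) / c) - f ((a + b + c + 2) / a) -
      f ((a + b + c + 2) / (b + c + 1)) - f ((b + c + 1) / b) - f ((b + c + 1) / c) ≤ 2 * g (Real.logb 2 (a / c) + C) := by
  refine ⟨2070, ?_⟩
  rintro _ _ _ ⟨a, ha, rfl⟩ ⟨b, hb, rfl⟩ ⟨c, hc, rfl⟩ hmax
  change linkPotentialChange a b c ≤ _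
  have ha : (0 : ℝ) < a := Nat.cast_pos.2 ha
  have hb : (0 : ℝ) < b := Nat.cast_pos.2 hb
  have hc : (0 : ℝ) < c := Nat.cast_pos.2 hc
  set L := logb 2 (a / c)
  rcases le_total (c : ℝ) a with hca | hac
  · have hL : 0 ≤ L := logb_nonneg one_lt_two ((one_le_div hc).2 hca)
    calc linkPotentialChange a b c ≤ f (a / c) + f (2 * (a / c)) :=
          linkPotentialChange_le_of_le hb hc hca
      _ = g L + g (L + 1) := by
          rw [f_eq_g_logb, f_eq_g_logb, logb_mul two_ne_zero (by positivity),
            logb_self_eq_one one_lt_two, add_comm 1]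
      _ ≤ 2 * g (L + 2070) := by
          linarith [g_monotoneOn hL (show 0 ≤ L + 2070 by linarith) (by linarith),
            g_monotoneOn (show 0 ≤ L + 1 by linarith) (show 0 ≤ L + 2070 by linarith) (by linarith)]
  · have hcK : (c : ℝ) ≤ 2 ^ 24 * a := by linarith [le_max_right ((3000 : ℝ) * b) c]
    have hL : -24 ≤ L := by
      have h := logb_nonneg one_lt_two (x := a / c * 2 ^ 24)
        (by rw [div_mul_eq_mul_div, one_le_div hc]; linarith)
      rw [logb_mul (by positivity) (by positivity), logb_pow, logb_self_eq_one one_lt_two] at h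
      linarith
    calc linkPotentialChange a b c ≤ f 2 + f (2 ^ 24) :=
          linkPotentialChange_le_of_ge ha hb hac (by norm_num) hcK
      _ = g 1 + g 24 := by
          rw [f_eq_g_logb, f_eq_g_logb, logb_pow, logb_self_eq_one one_lt_two]
          norm_num
      _ ≤ 2 * g (2 ^ 11 - 2) := by
          rw [g_two_pow_sub_two]
          linarith [g_le_self zero_le_one, g_le_self (show (0 : ℝ) ≤ 24 by norm_num)]
      _ ≤ 2 * g (L + 2070) := by
          gcongr
          exact g_monotoneOn (by norm_num) (show 0 ≤ L + 2070 by linarith) (by linarith)
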